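/- Let S1 be a schedule of N feasible for the bipartite order ⊴₁ = ⊴ ∩ (N⁺ × N⁻), and suppose there exist jobs k, l with k scheduled before l in S1 but l ⊴ k (a violated pair), chosen so that the number of jobs strictly between k and l in S1 is minimal, and suppose c_l < 0. Then the schedule S2 obtained from S1 by moving l to the position immediately before k (keeping all other jobs in order) is feasible for ⊴₁, has budget b(S2) ≤ b(S1), and has strictly fewer violated pairs with respect to ⊴ than S1. -/

import Mathlib

open List

variable {ι : Type*} [DecidableEq ι]

/-- Total cost of a schedule (list of jobs). -/
def listCost (c : ι → ℝ) (S : List ι) : ℝ := (S.map c).sum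

/-- Budget of a schedule: maximum cost of a prefix (the empty prefix has cost 0). -/
def listBudget (c : ι → ℝ) : List ι → ℝ
  | [] => 0
  | j :: t => max 0 (c j + listBudget c t)

/-- Return of a schedule. -/
def listReturn (c : ι → ℝ) (S : List ι) : ℝ := listCost c S - listBudget c S

/-- `S` enumerates the finite job set `N` without repetition. -/
def IsScheduleOf (N : Finset ι) (S : List ι) : Prop :=
  S.Nodup ∧ ∀ j, j ∈ S ↔ j ∈ N

/-- `S` is a linear extension of the precedence relation `r` (restricted to its jobs). -/
def RespectsOrder (r : ι → ι → Prop) (S : List ι) : Prop :=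
  ∀ i j, r i j → i ∈ S → j ∈ S → S.idxOf i ≤ S.idxOf j

/-- Minimum budget over all feasible schedules of the job set `X`. -/
noncomputable def setBudget (r : ι → ι → Prop) (c : ι → ℝ) (X : Finset ι) : ℝ :=
  sInf {b | ∃ S : List ι, IsScheduleOf X S ∧ RespectsOrder r S ∧ listBudget c S = b}

/-- Total cost of a job set. -/
def setCost (c : ι → ℝ) (X : Finset ι) : ℝ := ∑ j ∈ X, c j

/-- Return of a job set. -/
noncomputable def setReturn (r : ι → ι → Prop) (c : ι → ℝ) (X : Finset ι) : ℝ :=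
  setCost c X - setBudget r c X

/-- The cbr-preorder on job sets. -/
def cbrLE (r : ι → ι → Prop) (c : ι → ℝ) (X Y : Finset ι) : Prop :=
  (setCost c X < 0 ∧ 0 ≤ setCost c Y) ∨
  (setCost c X < 0 ∧ setCost c Y < 0 ∧ setBudget r c X < setBudget r c Y) ∨
  (setCost c X < 0 ∧ setCost c Y < 0 ∧ setBudget r c X = setBudget r c Y ∧
    setReturn r c X ≤ setReturn r c Y) ∨
  (0 ≤ setCost c X ∧ 0 ≤ setCost c Y ∧ setReturn r c X ≤ setReturn r c Y)

/-- `J` is an ideal (downward-closed subset) of `r` restricted to `I`. -/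
def IsIdealIn (r : ι → ι → Prop) (I J : Finset ι) : Prop :=
  J ⊆ I ∧ ∀ j ∈ J, ∀ i ∈ I, r i j → i ∈ J

/-- `F` is a filter (upward-closed subset) of `r` restricted to `I`. -/
def IsFilterIn (r : ι → ι → Prop) (I F : Finset ι) : Prop :=
  F ⊆ I ∧ ∀ i ∈ F, ∀ j ∈ I, r i j → j ∈ F

/-- `I` is an interval of `r` on `N`: intersection of an ideal and a filter. -/
def IsIntervalIn (r : ι → ι → Prop) (N I : Finset ι) : Prop :=
  ∃ J F, IsIdealIn r N J ∧ IsFilterIn r N F ∧ I = J ∩ F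

/-- An irreducible interval: every ideal of the restricted order is `⪰` the interval. -/
def IsIrreducibleIn (r : ι → ι → Prop) (c : ι → ℝ) (N I : Finset ι) : Prop :=
  IsIntervalIn r N I ∧ ∀ J, IsIdealIn r I J → cbrLE r c I J

/-- A schedule (given as blocks `SS`) in increasing irreducible structure. -/
def IncIrrStructure (r : ι → ι → Prop) (c : ι → ℝ) (N : Finset ι)
    (SS : List (List ι)) : Prop :=
  IsScheduleOf N SS.flatten ∧ RespectsOrder r SS.flatten ∧
  (∀ S ∈ SS, IsIrreducibleIn r c N S.toFinset ∧ RespectsOrder r S ∧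
    listBudget c S = setBudget r c S.toFinset) ∧
  ∀ i j : Fin SS.length, i < j → cbrLE r c (SS.get i).toFinset (SS.get j).toFinset

open Classical in
/-- Number of pairs scheduled in violation of the partial order `r`. -/
noncomputable def violations (r : ι → ι → Prop) (S : List ι) : ℕ :=
  ((S.toFinset ×ˢ S.toFinset).filter
    (fun p : ι × ι => S.idxOf p.1 < S.idxOf p.2 ∧ r p.2 p.1)).card

/-!
Moving `l` in front of `k` only reverses the relative order of `l` and the jobs of the block
`k :: B₁`. None of these jobs precedes `l`: `k ⊴ l` contradicts antisymmetry, and `i ⊴ l` with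
`i ∈ B₁` gives `i ⊴ k`, a violated pair with fewer jobs in between than `(k, l)`. So no
precedence constraint is broken and no violated pair is created, while `(k, l)` is repaired.
A job of negative cost moved earlier cannot raise the maximal prefix cost.
-/

namespace List

theorem perm_move {α : Type*} (A M B : List α) (l : α) :
    (A ++ l :: (M ++ B)) ~ (A ++ (M ++ l :: B)) :=
  perm_middle.symm.append_left A

variable {α : Type*} [DecidableEq α]

theorem idxOf_append_lt_idxOf_append_iff {A X : List α} {x y : α} :
    (A ++ X).idxOf x < (A ++ X).idxOf y ↔
      A.idxOf x < A.idxOf y ∨ x ∉ A ∧ y ∉ A ∧ X.idxOf x < X.idxOf y := by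
  by_cases hx : x ∈ A <;> by_cases hy : y ∈ A
  · simp [idxOf_append_of_mem hx, idxOf_append_of_mem hy, hx]
  · have := idxOf_lt_length_of_mem hx
    simp [idxOf_append_of_mem hx, idxOf_append_of_notMem hy, hy]
    omega
  · have := idxOf_lt_length_of_mem hy
    simp only [idxOf_append_of_notMem hx, idxOf_append_of_mem hy, idxOf_of_notMem hx]
    exact iff_of_false (by omega) (by rintro (h | ⟨-, h, -⟩) <;> [omega; exact h hy])
  · simp [idxOf_append_of_notMem hx, idxOf_append_of_notMem hy, hx, hy]

theorem idxOf_lt_idxOf_of_move {A M B : List α} {l x y : α} (hxy : x = l → y ∉ M)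
    (h : (A ++ l :: (M ++ B)).idxOf x < (A ++ l :: (M ++ B)).idxOf y) :
    (A ++ (M ++ l :: B)).idxOf x < (A ++ (M ++ l :: B)).idxOf y := by
  rw [idxOf_append_lt_idxOf_append_iff] at h ⊢
  refine h.imp_right fun ⟨hxA, hyA, h⟩ => ⟨hxA, hyA, ?_⟩
  have hyl : y ≠ l := by rintro rfl; simp at h
  rw [idxOf_append_lt_idxOf_append_iff]
  by_cases hxl : x = l
  · subst hxl
    have hyM := hxy rfl
    by_cases hxM : x ∈ M
    · left
      simpa [idxOf_of_notMem hyM] using idxOf_lt_length_of_mem hxM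
    · right
      simp [hxM, hyM, idxOf_cons_ne _ (Ne.symm hyl)]
  · rw [idxOf_cons_ne _ (Ne.symm hxl), idxOf_cons_ne _ (Ne.symm hyl), Nat.succ_lt_succ_iff,
      idxOf_append_lt_idxOf_append_iff] at h
    simpa [idxOf_cons_ne _ (Ne.symm hxl), idxOf_cons_ne _ (Ne.symm hyl)] using h

theorem length_filter_idxOf_mem_Ioo_le {S : List α} (hS : S.Nodup) (a b : ℕ) :
    (S.filter fun j => decide (a < S.idxOf j ∧ S.idxOf j < b)).length ≤ b - a - 1 := by
  rw [← toFinset_card_of_nodup (hS.filter _), ← Nat.card_Ioo]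
  refine Finset.card_le_card_of_injOn S.idxOf (fun j hj => ?_) (fun i hi j _ hij => ?_)
  · simpa using (mem_filter.1 (mem_toFinset.1 hj)).2
  · exact (idxOf_inj (mem_of_mem_filter (mem_toFinset.1 hi))).1 hij

end List

section Budget

variable {α : Type*}

theorem listBudget_nonneg (c : α → ℝ) (S : List α) : 0 ≤ listBudget c S := by
  cases S <;> simp [listBudget]

theorem listBudget_append (c : α → ℝ) (A X : List α) :
    listBudget c (A ++ X) = max (listBudget c A) (listCost c A + listBudget c X) := by
  induction A with
  | nil => simp [listBudget, listCost, listBudget_nonneg c X]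
  | cons a A ih =>
    simp only [cons_append, listBudget, listCost, map_cons, sum_cons] at ih ⊢
    rw [ih, ← max_add_add_left, ← max_assoc, add_assoc]

theorem listBudget_append_le_append (c : α → ℝ) {A X Y : List α}
    (h : listBudget c X ≤ listBudget c Y) : listBudget c (A ++ X) ≤ listBudget c (A ++ Y) := by
  rw [listBudget_append, listBudget_append]
  gcongr

theorem listBudget_cons_append_le {c : α → ℝ} {M B : List α} {l : α} (hl : c l < 0) :
    listBudget c (l :: (M ++ B)) ≤ listBudget c (M ++ l :: B) := by
  rw [listBudget_append, listBudget, listBudget, listBudget_append]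
  refine max_le ((listBudget_nonneg c M).trans (le_max_left _ _)) ?_
  rw [← max_add_add_left]
  refine max_le ?_ ?_
  · linarith [le_max_left (listBudget c M) (listCost c M + max 0 (c l + listBudget c B))]
  · calc c l + (listCost c M + listBudget c B) = listCost c M + (c l + listBudget c B) := by ring
        _ ≤ listCost c M + max 0 (c l + listBudget c B) := by gcongr; exact le_max_right _ _
        _ ≤ _ := le_max_right _ _

end Budget

theorem RespectsOrder.of_move {r : ι → ι → Prop} {A M B : List ι} {l : ι}
    (h : RespectsOrder r (A ++ (M ++ l :: B))) (hM : ∀ m ∈ M, ¬ r m l) :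
    RespectsOrder r (A ++ l :: (M ++ B)) := by
  intro i j hij hi hj
  by_contra! hji
  refine (idxOf_lt_idxOf_of_move (fun hjl hiM => hM i hiM (by rwa [hjl] at hij)) hji).not_ge ?_
  exact h i j hij ((perm_move A M B l).subset hi) ((perm_move A M B l).subset hj)

theorem violations_lt_violations {r : ι → ι → Prop} {S T : List ι} (hST : S ~ T)
    (hsub : ∀ x y, S.idxOf x < S.idxOf y → r y x → T.idxOf x < T.idxOf y) {a b : ι}
    (ha : a ∈ T) (hb : b ∈ T) (hab : T.idxOf a < T.idxOf b) (hba : r b a)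
    (hS : ¬ S.idxOf a < S.idxOf b) : violations r S < violations r T := by
  unfold violations
  rw [toFinset_eq_of_perm S T hST]
  refine Finset.card_lt_card ((Finset.ssubset_iff_of_subset ?_).2 ⟨(a, b), ?_, ?_⟩)
  · intro p hp
    simp only [Finset.mem_filter] at hp ⊢
    exact ⟨hp.1, hsub _ _ hp.2.1 hp.2.2, hp.2.2⟩
  · simp [ha, hb, hab, hba]
  · simp [hS]

theorem violations_lt_of_move {r : ι → ι → Prop} {A M B : List ι} {k l : ι}
    (hnd : (A ++ (k :: M ++ l :: B)).Nodup) (hM : ∀ m ∈ k :: M, ¬ r m l) (hlk : r l k) :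
    violations r (A ++ l :: (k :: M ++ B)) < violations r (A ++ (k :: M ++ l :: B)) := by
  have hkA : k ∉ A := fun h => disjoint_of_nodup_append hnd h (by simp)
  have hlA : l ∉ A := fun h => disjoint_of_nodup_append hnd h (by simp)
  have hkl : k ≠ l := by
    rintro rfl
    simpa using (nodup_cons.1 (nodup_append.1 hnd).2.1).1
  refine violations_lt_violations (perm_move A _ B l)
    (fun x y hxy hyx => idxOf_lt_idxOf_of_move (fun hxl hyM => hM y hyM (hxl ▸ hyx)) hxy)
    (by simp) (by simp) ?_ hlk ?_
  · simp [idxOf_append_lt_idxOf_append_iff, hkA, hlA, hkl]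
  · simp [idxOf_append_lt_idxOf_append_iff, hkA, hlA]

theorem not_rel_of_mem_between {r : ι → ι → Prop} {S A B₁ C : List ι} {k i : ι}
    (hnd : S.Nodup) (hS : S = A ++ k :: (B₁ ++ C))
    (hmin : ∀ k' l', k' ∈ S → l' ∈ S → S.idxOf k' < S.idxOf l' → r l' k' →
      B₁.length ≤ (S.filter
        (fun j => decide (S.idxOf k' < S.idxOf j ∧ S.idxOf j < S.idxOf l'))).length)
    (hi : i ∈ B₁) : ¬ r i k := by
  subst hS
  have hkA : k ∉ A := fun h => disjoint_of_nodup_append hnd h (by simp)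
  have hiA : i ∉ A := fun h => disjoint_of_nodup_append hnd h (by simp [hi])
  have hki : k ≠ i := by
    rintro rfl
    simpa [hi] using (nodup_cons.1 (nodup_append.1 hnd).2.1).1
  have hk : (A ++ k :: (B₁ ++ C)).idxOf k = A.length := by
    simp [idxOf_append_of_notMem hkA]
  have hi' : (A ++ k :: (B₁ ++ C)).idxOf i = A.length + (B₁.idxOf i + 1) := by
    rw [idxOf_append_of_notMem hiA, idxOf_cons_ne _ hki, idxOf_append_of_mem hi]
  have hiB₁ := idxOf_lt_length_of_mem hi
  intro hik
  have hcount := (hmin k i (by simp) (by simp [hi]) (by omega) hik).trans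
    (length_filter_idxOf_mem_Ioo_le hnd _ _)
  omega

theorem move_negative_job (r : ι → ι → Prop) (hr : IsPartialOrder ι r)
    (c : ι → ℝ) (N : Finset ι) (A B₁ B₂ : List ι) (k l : ι)
    (S1 : List ι) (hS1 : S1 = A ++ k :: (B₁ ++ l :: B₂))
    (hsched : IsScheduleOf N S1)
    (hfeas : RespectsOrder (fun i j => r i j ∧ 0 ≤ c i ∧ c j < 0) S1)
    (hviol : r l k) (hcl : c l < 0)
    (hmin : ∀ k' l', k' ∈ S1 → l' ∈ S1 → S1.idxOf k' < S1.idxOf l' → r l' k' →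
      B₁.length ≤ (S1.filter
        (fun j => decide (S1.idxOf k' < S1.idxOf j ∧ S1.idxOf j < S1.idxOf l'))).length) :
    RespectsOrder (fun i j => r i j ∧ 0 ≤ c i ∧ c j < 0) (A ++ l :: k :: (B₁ ++ B₂)) ∧
    listBudget c (A ++ l :: k :: (B₁ ++ B₂)) ≤ listBudget c S1 ∧
    violations r (A ++ l :: k :: (B₁ ++ B₂)) < violations r S1 := by
  subst hS1
  have hnd := hsched.1
  have hkl : k ≠ l := by
    rintro rfl
    simpa using (nodup_cons.1 (nodup_append.1 hnd).2.1).1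
  have hM : ∀ m ∈ k :: B₁, ¬ r m l := by
    rintro m (_ | ⟨_, hm⟩) hml
    · exact hkl (hr.antisymm _ _ hml hviol)
    · exact not_rel_of_mem_between hnd rfl hmin hm (hr.trans _ _ _ hml hviol)
  exact ⟨hfeas.of_move (M := k :: B₁) fun m hm h => hM m hm h.1,
    listBudget_append_le_append c (listBudget_cons_append_le (M := k :: B₁) hcl),
    violations_lt_of_move hnd hM hviol⟩
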